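/- arXiv:2003.01265 — 4 statements merged into one kernel-verified Lean document; each statement's English description precedes it below -/
import Mathlib

section
/- Let Γ : ℝ^{2n} → ℝ^{2n} be a continuously differentiable bijection with continuously differentiable inverse, such that the Jacobian DΓ(z) satisfies (DΓ(z))ᵀ Ω (DΓ(z)) = Ω for every z ∈ ℝ^{2n}. Let φ, Φ : ℝ^{2n} → ℝ be differentiable functions such that the map z ↦ ∇φ(z)ᵀ Ω ∇Φ(z) is Lebesgue integrable on ℝ^{2n}. Then the map z ↦ ∇(φ∘Γ)(z)ᵀ Ω ∇(Φ∘Γ)(z) is also Lebesgue integrable and ∫_{ℝ^{2n}} ∇(φ∘Γ)(z)ᵀ Ω ∇(Φ∘Γ)(z) dz = ∫_{ℝ^{2n}} ∇φ(z)ᵀ Ω ∇Φ(z) dz. -/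
open Matrix MeasureTheory

/-- The standard symplectic matrix `Ω = [[0, I], [-I, 0]]` on `ℝ^{2n}`,
indexed by `Fin n ⊕ Fin n`. -/
noncomputable def Omega (n : ℕ) : Matrix (Fin n ⊕ Fin n) (Fin n ⊕ Fin n) ℝ :=
  Matrix.fromBlocks 0 1 (-1) 0

/-- The gradient of a scalar function on `ℝ^{2n}`. -/
noncomputable def grad {n : ℕ} (h : ((Fin n ⊕ Fin n) → ℝ) → ℝ)
    (z : (Fin n ⊕ Fin n) → ℝ) : (Fin n ⊕ Fin n) → ℝ :=
  fun i => fderiv ℝ h z (Pi.single i 1)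

/-- The Jacobian matrix of a vector field on `ℝ^{2n}`. -/
noncomputable def jac {n : ℕ} (F : ((Fin n ⊕ Fin n) → ℝ) → ((Fin n ⊕ Fin n) → ℝ))
    (z : (Fin n ⊕ Fin n) → ℝ) : Matrix (Fin n ⊕ Fin n) (Fin n ⊕ Fin n) ℝ :=
  Matrix.of fun i j => fderiv ℝ (fun y => F y i) z (Pi.single j 1)

/-! The chain rule gives `∇(φ ∘ Γ) = DΓᵀ ∇φ ∘ Γ`, and a matrix is symplectic iff its transpose is,
so `DΓ Ω DΓᵀ = Ω`; hence the integrand for `(φ ∘ Γ, Φ ∘ Γ)` is the integrand for `(φ, Φ)` composed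
with `Γ`. Symplectic matrices have determinant `1`, so by the change of variables formula `Γ`
preserves Lebesgue measure, which transports both integrability and the integral. -/

lemma Omega_eq_neg_J (n : ℕ) : Omega n = -Matrix.J (Fin n) ℝ := by
  simp [Omega, Matrix.J, fromBlocks_neg]

section SymplecticMatrix

variable {n : ℕ}

lemma mem_symplecticGroup_iff_transpose_mul_Omega_mul
    {A : Matrix (Fin n ⊕ Fin n) (Fin n ⊕ Fin n) ℝ} :
    A ∈ symplecticGroup (Fin n) ℝ ↔ Aᵀ * Omega n * A = Omega n := by
  rw [SymplecticGroup.mem_iff', Omega_eq_neg_J, Matrix.mul_neg, Matrix.neg_mul, neg_inj]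

lemma mul_Omega_mul_transpose_of_mem_symplecticGroup
    {A : Matrix (Fin n ⊕ Fin n) (Fin n ⊕ Fin n) ℝ} (hA : A ∈ symplecticGroup (Fin n) ℝ) :
    A * Omega n * Aᵀ = Omega n := by
  rw [Omega_eq_neg_J, Matrix.mul_neg, Matrix.neg_mul, SymplecticGroup.mem_iff.mp hA]

end SymplecticMatrix

lemma Matrix.transpose_mulVec_dotProduct_mulVec_transpose_mulVec {ι R : Type*} [Fintype ι]
    [CommSemiring R] {A M : Matrix ι ι R} (h : A * M * Aᵀ = M) (u v : ι → R) :
    (Aᵀ *ᵥ u) ⬝ᵥ M *ᵥ (Aᵀ *ᵥ v) = u ⬝ᵥ M *ᵥ v := by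
  rw [mulVec_mulVec, mulVec_transpose, dotProduct_mulVec, vecMul_vecMul, ← Matrix.mul_assoc, h,
    ← dotProduct_mulVec]

section Calculus

variable {n : ℕ}

lemma fderiv_apply_eq_dotProduct_grad (φ : ((Fin n ⊕ Fin n) → ℝ) → ℝ)
    (z v : (Fin n ⊕ Fin n) → ℝ) : fderiv ℝ φ z v = v ⬝ᵥ grad φ z := by
  conv_lhs => rw [pi_eq_sum_univ' v]
  simp only [map_sum, map_smul, smul_eq_mul, dotProduct, grad]

lemma jac_eq_toMatrix' {Γ : ((Fin n ⊕ Fin n) → ℝ) → ((Fin n ⊕ Fin n) → ℝ)}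
    {z : (Fin n ⊕ Fin n) → ℝ} (hΓ : DifferentiableAt ℝ Γ z) :
    jac Γ z = LinearMap.toMatrix' (fderiv ℝ Γ z : ((Fin n ⊕ Fin n) → ℝ) →ₗ[ℝ] _) := by
  ext i j
  simp [jac, LinearMap.toMatrix'_apply, fderiv_apply hΓ]

lemma det_jac {Γ : ((Fin n ⊕ Fin n) → ℝ) → ((Fin n ⊕ Fin n) → ℝ)}
    {z : (Fin n ⊕ Fin n) → ℝ} (hΓ : DifferentiableAt ℝ Γ z) :
    (jac Γ z).det = (fderiv ℝ Γ z).det := by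
  rw [jac_eq_toMatrix' hΓ, LinearMap.det_toMatrix', ContinuousLinearMap.det]

lemma grad_comp {Γ : ((Fin n ⊕ Fin n) → ℝ) → ((Fin n ⊕ Fin n) → ℝ)}
    {φ : ((Fin n ⊕ Fin n) → ℝ) → ℝ} {z : (Fin n ⊕ Fin n) → ℝ}
    (hΓ : DifferentiableAt ℝ Γ z) (hφ : DifferentiableAt ℝ φ (Γ z)) :
    grad (φ ∘ Γ) z = (jac Γ z)ᵀ *ᵥ grad φ (Γ z) := by
  ext i
  rw [grad, fderiv_comp z hφ hΓ, ContinuousLinearMap.comp_apply, fderiv_apply_eq_dotProduct_grad,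
    ← ContinuousLinearMap.coe_coe, ← LinearMap.toMatrix'_mulVec, ← jac_eq_toMatrix' hΓ,
    mulVec_single_one, mulVec]
  rfl

lemma grad_comp_dotProduct_Omega_mulVec_grad_comp
    {Γ : ((Fin n ⊕ Fin n) → ℝ) → ((Fin n ⊕ Fin n) → ℝ)}
    {φ Φ : ((Fin n ⊕ Fin n) → ℝ) → ℝ} {z : (Fin n ⊕ Fin n) → ℝ}
    (hΓ : DifferentiableAt ℝ Γ z) (hsymp : jac Γ z ∈ symplecticGroup (Fin n) ℝ)
    (hφ : DifferentiableAt ℝ φ (Γ z)) (hΦ : DifferentiableAt ℝ Φ (Γ z)) :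
    grad (φ ∘ Γ) z ⬝ᵥ Omega n *ᵥ grad (Φ ∘ Γ) z = grad φ (Γ z) ⬝ᵥ Omega n *ᵥ grad Φ (Γ z) := by
  rw [grad_comp hΓ hφ, grad_comp hΓ hΦ, transpose_mulVec_dotProduct_mulVec_transpose_mulVec
    (mul_Omega_mul_transpose_of_mem_symplecticGroup hsymp)]

end Calculus

theorem measurePreserving_of_abs_det_fderiv_eq_one {E : Type*} [NormedAddCommGroup E]
    [NormedSpace ℝ E] [FiniteDimensional ℝ E] [MeasurableSpace E] [BorelSpace E]
    (μ : Measure E) [μ.IsAddHaarMeasure] {f : E → E} {f' : E → E →L[ℝ] E}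
    (hf' : ∀ x, HasFDerivAt f (f' x) x) (hdet : ∀ x, |(f' x).det| = 1)
    (hf : Function.Bijective f) : MeasurePreserving f μ μ := by
  refine ⟨(continuous_iff_continuousAt.mpr fun x => (hf' x).continuousAt).measurable, ?_⟩
  simpa [hdet, hf.surjective.range_eq] using
    map_withDensity_abs_det_fderiv_eq_addHaar μ nullMeasurableSet_univ
      (fun x _ => (hf' x).hasFDerivWithinAt) hf.injective.injOn

theorem stmt_6_general (n : ℕ) (Γ Γinv : ((Fin n ⊕ Fin n) → ℝ) → ((Fin n ⊕ Fin n) → ℝ))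
    (hΓ : ContDiff ℝ 1 Γ)
    (hleft : Function.LeftInverse Γinv Γ) (hright : Function.RightInverse Γinv Γ)
    (hsymp : ∀ z, (jac Γ z)ᵀ * Omega n * jac Γ z = Omega n)
    (φ Φ : ((Fin n ⊕ Fin n) → ℝ) → ℝ)
    (hφ : Differentiable ℝ φ) (hΦ : Differentiable ℝ Φ)
    (hint : Integrable (fun z => grad φ z ⬝ᵥ (Omega n).mulVec (grad Φ z))) :
    Integrable (fun z => grad (φ ∘ Γ) z ⬝ᵥ (Omega n).mulVec (grad (Φ ∘ Γ) z)) ∧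
      ∫ z, grad (φ ∘ Γ) z ⬝ᵥ (Omega n).mulVec (grad (Φ ∘ Γ) z)
        = ∫ z, grad φ z ⬝ᵥ (Omega n).mulVec (grad Φ z) := by
  have hΓdiff : Differentiable ℝ Γ := hΓ.differentiable one_ne_zero
  have hjac z : jac Γ z ∈ symplecticGroup (Fin n) ℝ :=
    mem_symplecticGroup_iff_transpose_mul_Omega_mul.mpr (hsymp z)
  have hΓmp : MeasurePreserving Γ volume volume :=
    measurePreserving_of_abs_det_fderiv_eq_one volume (fun z => (hΓdiff z).hasFDerivAt)
      (fun z => by rw [← det_jac (hΓdiff z), SymplecticGroup.det_eq_one (hjac z), abs_one])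
      ⟨hleft.injective, hright.surjective⟩
  have hΓemb : MeasurableEmbedding Γ := hΓ.continuous.measurableEmbedding hleft.injective
  have hdensity : (fun z => grad (φ ∘ Γ) z ⬝ᵥ (Omega n).mulVec (grad (Φ ∘ Γ) z))
      = (fun z => grad φ z ⬝ᵥ (Omega n).mulVec (grad Φ z)) ∘ Γ :=
    funext fun z => grad_comp_dotProduct_Omega_mulVec_grad_comp (hΓdiff z) (hjac z) (hφ _) (hΦ _)
  rw [hdensity]
  exact ⟨hΓmp.integrable_comp_of_integrable hint,
    hΓmp.integral_comp hΓemb fun z => grad φ z ⬝ᵥ (Omega n).mulVec (grad Φ z)⟩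

/-- if `Γ` is a `C¹` diffeomorphism of `ℝ^{2n}` whose Jacobian is everywhere
symplectic, and `φ, Φ` are differentiable with `z ↦ ∇φ(z)ᵀ Ω ∇Φ(z)` integrable, then
`z ↦ ∇(φ∘Γ)(z)ᵀ Ω ∇(Φ∘Γ)(z)` is integrable with the same integral
(symplecticity of the Koopman operator). -/
theorem stmt_6 (n : ℕ) (Γ Γinv : ((Fin n ⊕ Fin n) → ℝ) → ((Fin n ⊕ Fin n) → ℝ))
    (hΓ : ContDiff ℝ 1 Γ) (hΓinv : ContDiff ℝ 1 Γinv)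
    (hleft : Function.LeftInverse Γinv Γ) (hright : Function.RightInverse Γinv Γ)
    (hsymp : ∀ z, (jac Γ z)ᵀ * Omega n * jac Γ z = Omega n)
    (φ Φ : ((Fin n ⊕ Fin n) → ℝ) → ℝ)
    (hφ : Differentiable ℝ φ) (hΦ : Differentiable ℝ Φ)
    (hint : Integrable (fun z => grad φ z ⬝ᵥ (Omega n).mulVec (grad Φ z))) :
    Integrable (fun z => grad (φ ∘ Γ) z ⬝ᵥ (Omega n).mulVec (grad (Φ ∘ Γ) z)) ∧
      ∫ z, grad (φ ∘ Γ) z ⬝ᵥ (Omega n).mulVec (grad (Φ ∘ Γ) z)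
        = ∫ z, grad φ z ⬝ᵥ (Omega n).mulVec (grad Φ z) :=
  stmt_6_general n Γ Γinv hΓ hleft hright hsymp φ Φ hφ hΦ hint
end

section
/- Let F : ℝ^{2n} → ℝ^{2n} be continuously differentiable such that Ω · DF(z) is a symmetric matrix for every z ∈ ℝ^{2n}, and let φ, Φ : ℝ^{2n} → ℝ be twice continuously differentiable with compact support. Define (L φ)(z) = F(z)ᵀ ∇φ(z) and (L Φ)(z) = F(z)ᵀ ∇Φ(z). Then ∫_{ℝ^{2n}} ∇φ(z)ᵀ Ω ∇(L Φ)(z) dz = − ∫_{ℝ^{2n}} ∇(L φ)(z)ᵀ Ω ∇Φ(z) dz. -/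
/-! The two integrands add up to a divergence: pointwise,
`∇φᵀ Ω ∇(LΦ) + ∇(Lφ)ᵀ Ω ∇Φ = div (g F)` with `g = ∇φᵀ Ω ∇Φ`. Expanding both sides by the
product rule, the Hessian terms agree by symmetry of second derivatives, while the terms
containing `DF` cancel and `div F = tr DF` vanishes, both because `Ω DF` symmetric forces
`DFᵀ = Ω DF Ω`. Since `g F` is `C¹` with compact support, its divergence integrates to zero. -/

open Matrix MeasureTheory

namespace Matrix

variable {ι : Type*} [Fintype ι]

lemma IsSymm.mulVec_dotProduct {A : Matrix ι ι ℝ} (hA : A.IsSymm) (x y : ι → ℝ) :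
    A *ᵥ x ⬝ᵥ y = x ⬝ᵥ A *ᵥ y := by
  rw [dotProduct_comm, ← dotProduct_transpose_mulVec, hA.eq]

variable [DecidableEq ι] {M J : Matrix ι ι ℝ}

lemma transpose_eq_mul_mul_of_isSymm_mul (hM : Mᵀ = -M) (hM2 : M * M = -1)
    (hMJ : (M * J).IsSymm) : Jᵀ = M * J * M := by
  have hJtM : Jᵀ * M = -(M * J) :=
    neg_eq_iff_eq_neg.mp (by simpa [transpose_mul, hM] using hMJ.eq)
  calc Jᵀ = -(Jᵀ * (M * M)) := by simp [hM2]
    _ = M * J * M := by rw [← Matrix.mul_assoc, hJtM]; simp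

lemma trace_eq_zero_of_isSymm_mul (hM : Mᵀ = -M) (hM2 : M * M = -1)
    (hMJ : (M * J).IsSymm) : J.trace = 0 := by
  have h := trace_transpose J
  rw [transpose_eq_mul_mul_of_isSymm_mul hM hM2 hMJ, trace_mul_cycle, hM2] at h
  simp only [Matrix.neg_mul, Matrix.one_mul, trace_neg] at h
  linarith

lemma dotProduct_mulVec_transpose_add_eq_zero (hM : Mᵀ = -M) (hM2 : M * M = -1)
    (hMJ : (M * J).IsSymm) (a b : ι → ℝ) :
    a ⬝ᵥ M *ᵥ (Jᵀ *ᵥ b) + (Jᵀ *ᵥ a) ⬝ᵥ M *ᵥ b = 0 := by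
  have hMJt : M * Jᵀ = -(J * M) := by
    rw [transpose_eq_mul_mul_of_isSymm_mul hM hM2 hMJ, ← Matrix.mul_assoc, ← Matrix.mul_assoc,
      hM2]
    simp
  rw [dotProduct_comm (Jᵀ *ᵥ a), dotProduct_transpose_mulVec, mulVec_mulVec, mulVec_mulVec, hMJt,
    neg_mulVec, dotProduct_neg, neg_add_cancel]

end Matrix

theorem ContDiff.dotProduct {E ι : Type*} [NormedAddCommGroup E] [NormedSpace ℝ E] [Fintype ι]
    {k : WithTop ℕ∞} {u v : E → ι → ℝ} (hu : ContDiff ℝ k u) (hv : ContDiff ℝ k v) :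
    ContDiff ℝ k fun x => u x ⬝ᵥ v x :=
  ContDiff.sum fun i _ => (contDiff_pi.1 hu i).mul (contDiff_pi.1 hv i)

theorem ContDiff.const_mulVec {E ι κ : Type*} [NormedAddCommGroup E] [NormedSpace ℝ E]
    [Fintype ι] [Fintype κ] {k : WithTop ℕ∞} (M : Matrix κ ι ℝ) {v : E → ι → ℝ}
    (hv : ContDiff ℝ k v) : ContDiff ℝ k fun x => M *ᵥ v x :=
  contDiff_pi.2 fun _ => contDiff_const.dotProduct hv

theorem integral_fderiv_apply_eq_zero {E : Type*} [NormedAddCommGroup E] [NormedSpace ℝ E]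
    [MeasurableSpace E] [BorelSpace E] [FiniteDimensional ℝ E] {μ : Measure E}
    [μ.IsAddHaarMeasure] {h : E → ℝ} (hh : ContDiff ℝ 1 h) (hs : HasCompactSupport h) (v : E) :
    ∫ x, fderiv ℝ h x v ∂μ = 0 := by
  have hdiff : Differentiable ℝ h := hh.differentiable one_ne_zero
  have hparts := integral_mul_fderiv_eq_neg_fderiv_mul_of_integrable
    (f := fun _ => (1 : ℝ)) (g := h) (v := v) (μ := μ) (by simp)
    (by simpa using ((hh.continuous_fderiv one_ne_zero).clm_apply continuous_const
      |>.integrable_of_hasCompactSupport (hs.fderiv_apply ℝ v)))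
    (by simpa using hh.continuous.integrable_of_hasCompactSupport hs)
    (fun x _ => differentiableAt_const 1) (fun x _ => hdiff x)
  simpa using hparts

theorem HasCompactSupport.dotProduct_right {α ι : Type*} [TopologicalSpace α] [Fintype ι]
    {u v : α → ι → ℝ} (hu : HasCompactSupport u) : HasCompactSupport fun x => u x ⬝ᵥ v x :=
  hu.mono fun x hx h0 => hx (by simp [h0])

theorem HasCompactSupport.dotProduct_left {α ι : Type*} [TopologicalSpace α] [Fintype ι]
    {u v : α → ι → ℝ} (hv : HasCompactSupport v) : HasCompactSupport fun x => u x ⬝ᵥ v x :=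
  hv.mono fun x hx h0 => hx (by simp [h0])

lemma Omega_transpose (n : ℕ) : (Omega n)ᵀ = -Omega n := by
  simp [Omega, fromBlocks_transpose, fromBlocks_neg]

lemma Omega_mul_Omega (n : ℕ) : Omega n * Omega n = -1 := by
  simp [Omega, fromBlocks_multiply, fromBlocks_neg, ← fromBlocks_one]

section PhaseSpace

variable {n : ℕ} {φ Φ : ((Fin n ⊕ Fin n) → ℝ) → ℝ}
  {F : ((Fin n ⊕ Fin n) → ℝ) → (Fin n ⊕ Fin n) → ℝ}

lemma contDiff_grad {k m : WithTop ℕ∞} (hφ : ContDiff ℝ m φ) (hkm : k + 1 ≤ m) :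
    ContDiff ℝ k (grad φ) :=
  contDiff_pi.2 fun _ => (hφ.fderiv_right hkm).clm_apply contDiff_const

lemma HasCompactSupport.grad (hφ : HasCompactSupport φ) : HasCompactSupport (grad φ) :=
  (hφ.fderiv ℝ).mono fun z hz h0 => hz (by funext i; simp [_root_.grad, h0])

lemma grad_dotProduct {u v : ((Fin n ⊕ Fin n) → ℝ) → (Fin n ⊕ Fin n) → ℝ}
    {z : (Fin n ⊕ Fin n) → ℝ} (hu : DifferentiableAt ℝ u z) (hv : DifferentiableAt ℝ v z) :
    grad (fun y => u y ⬝ᵥ v y) z = (jac u z)ᵀ *ᵥ v z + (jac v z)ᵀ *ᵥ u z := by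
  have hu' := differentiableAt_pi.1 hu
  have hv' := differentiableAt_pi.1 hv
  funext j
  simp only [grad, dotProduct]
  rw [fderiv_fun_sum fun i _ => (hu' i).fun_mul (hv' i)]
  simp only [FunLike.coe_sum, Finset.sum_apply, fderiv_fun_mul (hu' _) (hv' _),
    _root_.add_apply, _root_.smul_apply, smul_eq_mul, Finset.sum_add_distrib, Pi.add_apply,
    mulVec, dotProduct, transpose_apply, jac, of_apply]
  rw [add_comm]
  simp only [mul_comm]

lemma jac_mulVec (M : Matrix (Fin n ⊕ Fin n) (Fin n ⊕ Fin n) ℝ)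
    {v : ((Fin n ⊕ Fin n) → ℝ) → (Fin n ⊕ Fin n) → ℝ}
    {z : (Fin n ⊕ Fin n) → ℝ} (hv : DifferentiableAt ℝ v z) :
    jac (fun y => M *ᵥ v y) z = M * jac v z := by
  have hv' := differentiableAt_pi.1 hv
  ext i j
  simp only [jac, of_apply, mulVec, dotProduct, mul_apply]
  rw [fderiv_fun_sum fun k _ => (hv' k).const_mul _]
  simp [fderiv_const_mul (hv' _)]

lemma trace_jac_smul {g : ((Fin n ⊕ Fin n) → ℝ) → ℝ} {z : (Fin n ⊕ Fin n) → ℝ}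
    (hg : DifferentiableAt ℝ g z) (hF : DifferentiableAt ℝ F z) :
    (jac (fun y => g y • F y) z).trace = g z * (jac F z).trace + F z ⬝ᵥ grad g z := by
  have hF' := differentiableAt_pi.1 hF
  simp only [trace, diag, jac, of_apply, Pi.smul_apply, smul_eq_mul, dotProduct, grad,
    fderiv_fun_mul hg (hF' _), _root_.add_apply, _root_.smul_apply,
    smul_eq_mul, Finset.sum_add_distrib, Finset.mul_sum]

lemma jac_grad_isSymm (hφ : ContDiff ℝ 2 φ) (z : (Fin n ⊕ Fin n) → ℝ) :
    (jac (grad φ) z).IsSymm := by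
  have hdiff : DifferentiableAt ℝ (fderiv ℝ φ) z :=
    (hφ.fderiv_right (m := 1) le_rfl).differentiable one_ne_zero z
  refine IsSymm.ext fun i j => ?_
  simp only [jac, grad, of_apply]
  rw [fderiv_clm_apply hdiff (differentiableAt_const _), fderiv_clm_apply hdiff
    (differentiableAt_const _)]
  simpa using (hφ.contDiffAt.isSymmSndFDerivAt (by simp)) _ _

lemma integral_trace_jac_eq_zero {G : ((Fin n ⊕ Fin n) → ℝ) → (Fin n ⊕ Fin n) → ℝ}
    (hG : ContDiff ℝ 1 G) (hGs : HasCompactSupport G) : ∫ z, (jac G z).trace = 0 := by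
  have hGi : ∀ i, ContDiff ℝ 1 fun y => G y i := contDiff_pi.1 hG
  have hGis : ∀ i, HasCompactSupport fun y => G y i := fun i =>
    hGs.comp_left (g := fun v : (Fin n ⊕ Fin n) → ℝ => v i) rfl
  simp only [trace, diag, jac, of_apply]
  rw [integral_finsetSum _ fun i _ => ((hGi i).continuous_fderiv one_ne_zero).clm_apply
    continuous_const |>.integrable_of_hasCompactSupport ((hGis i).fderiv_apply ℝ _)]
  exact Finset.sum_eq_zero fun i _ => integral_fderiv_apply_eq_zero (hGi i) (hGis i) _

noncomputable def poissonBracket (φ Φ : ((Fin n ⊕ Fin n) → ℝ) → ℝ) (z : (Fin n ⊕ Fin n) → ℝ) :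
    ℝ :=
  grad φ z ⬝ᵥ Omega n *ᵥ grad Φ z

noncomputable def koopmanGenerator (F : ((Fin n ⊕ Fin n) → ℝ) → (Fin n ⊕ Fin n) → ℝ)
    (φ : ((Fin n ⊕ Fin n) → ℝ) → ℝ) (z : (Fin n ⊕ Fin n) → ℝ) : ℝ :=
  F z ⬝ᵥ grad φ z

lemma contDiff_poissonBracket {k m : WithTop ℕ∞} (hφ : ContDiff ℝ m φ) (hΦ : ContDiff ℝ m Φ)
    (hkm : k + 1 ≤ m) : ContDiff ℝ k (poissonBracket φ Φ) :=
  (contDiff_grad hφ hkm).dotProduct ((contDiff_grad hΦ hkm).const_mulVec (Omega n))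

lemma HasCompactSupport.poissonBracket_left (hφ : HasCompactSupport φ) :
    HasCompactSupport (poissonBracket φ Φ) :=
  hφ.grad.dotProduct_right

lemma HasCompactSupport.poissonBracket_right (hΦ : HasCompactSupport Φ) :
    HasCompactSupport (poissonBracket φ Φ) :=
  (hΦ.grad.comp_left (mulVec_zero (Omega n))).dotProduct_left

lemma contDiff_koopmanGenerator {k m : WithTop ℕ∞} (hF : ContDiff ℝ k F) (hφ : ContDiff ℝ m φ)
    (hkm : k + 1 ≤ m) : ContDiff ℝ k (koopmanGenerator F φ) :=
  hF.dotProduct (contDiff_grad hφ hkm)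

lemma poissonBracket_koopmanGenerator_add (hF : ContDiff ℝ 1 F) (hφ : ContDiff ℝ 2 φ)
    (hΦ : ContDiff ℝ 2 Φ) (z : (Fin n ⊕ Fin n) → ℝ) (hHam : (Omega n * jac F z).IsSymm) :
    poissonBracket φ (koopmanGenerator F Φ) z + poissonBracket (koopmanGenerator F φ) Φ z
      = (jac (fun y => poissonBracket φ Φ y • F y) z).trace := by
  have hF' : DifferentiableAt ℝ F z := hF.differentiable one_ne_zero z
  have hgradφ : ContDiff ℝ 1 (grad φ) := contDiff_grad hφ (by norm_num)
  have hgradΦ : ContDiff ℝ 1 (grad Φ) := contDiff_grad hΦ (by norm_num)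
  rw [trace_jac_smul
    ((contDiff_poissonBracket hφ hΦ (by norm_num)).differentiable one_ne_zero z) hF']
  unfold poissonBracket koopmanGenerator
  rw [grad_dotProduct hF' (hgradΦ.differentiable one_ne_zero z),
    grad_dotProduct hF' (hgradφ.differentiable one_ne_zero z),
    grad_dotProduct (hgradφ.differentiable one_ne_zero z)
      ((hgradΦ.const_mulVec _).differentiable one_ne_zero z),
    jac_mulVec _ (hgradΦ.differentiable one_ne_zero z),
    trace_eq_zero_of_isSymm_mul (Omega_transpose n) (Omega_mul_Omega n) hHam,
    (jac_grad_isSymm hφ z).eq, (jac_grad_isSymm hΦ z).eq]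
  have hJ := dotProduct_mulVec_transpose_add_eq_zero (Omega_transpose n) (Omega_mul_Omega n) hHam
    (grad φ z) (grad Φ z)
  rw [mulVec_add, dotProduct_add, add_dotProduct, dotProduct_add, dotProduct_transpose_mulVec,
    ← mulVec_mulVec, ← (jac_grad_isSymm hφ z).mulVec_dotProduct]
  linear_combination hJ

end PhaseSpace

/-- for a `C¹` Hamiltonian vector field `F` (i.e. `Ω DF(z)` symmetric) and
`C²` compactly supported observables `φ, Φ`, the operator `L φ = Fᵀ ∇φ` satisfies
`ω(φ, LΦ) = -ω(Lφ, Φ)` for the symplectic form `ω(φ, Φ) = ∫ ∇φᵀ Ω ∇Φ`. -/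
theorem stmt_8 (n : ℕ) (F : ((Fin n ⊕ Fin n) → ℝ) → ((Fin n ⊕ Fin n) → ℝ))
    (hF : ContDiff ℝ 1 F)
    (hHam : ∀ z, (Omega n * jac F z).IsSymm)
    (φ Φ : ((Fin n ⊕ Fin n) → ℝ) → ℝ)
    (hφ : ContDiff ℝ 2 φ) (hΦ : ContDiff ℝ 2 Φ)
    (hφs : HasCompactSupport φ) (hΦs : HasCompactSupport Φ) :
    ∫ z, grad φ z ⬝ᵥ (Omega n).mulVec (grad (fun y => F y ⬝ᵥ grad Φ y) z)
      = - ∫ z, grad (fun y => F y ⬝ᵥ grad φ y) z ⬝ᵥ (Omega n).mulVec (grad Φ z) := by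
  change ∫ z, poissonBracket φ (koopmanGenerator F Φ) z
    = - ∫ z, poissonBracket (koopmanGenerator F φ) Φ z
  have hφ₁ : ContDiff ℝ 1 φ := hφ.of_le one_le_two
  have hΦ₁ : ContDiff ℝ 1 Φ := hΦ.of_le one_le_two
  have hLφ : ContDiff ℝ 1 (koopmanGenerator F φ) := contDiff_koopmanGenerator hF hφ (by norm_num)
  have hLΦ : ContDiff ℝ 1 (koopmanGenerator F Φ) := contDiff_koopmanGenerator hF hΦ (by norm_num)
  have hA : Integrable (poissonBracket φ (koopmanGenerator F Φ)) :=
    (contDiff_poissonBracket (k := 0) hφ₁ hLΦ (by simp)).continuous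
      |>.integrable_of_hasCompactSupport hφs.poissonBracket_left
  have hB : Integrable (poissonBracket (koopmanGenerator F φ) Φ) :=
    (contDiff_poissonBracket (k := 0) hLφ hΦ₁ (by simp)).continuous
      |>.integrable_of_hasCompactSupport hΦs.poissonBracket_right
  have hdiv : ∫ z, (poissonBracket φ (koopmanGenerator F Φ) z
      + poissonBracket (koopmanGenerator F φ) Φ z) = 0 := by
    simp_rw [poissonBracket_koopmanGenerator_add hF hφ hΦ _ (hHam _)]
    exact integral_trace_jac_eq_zero ((contDiff_poissonBracket hφ hΦ (by norm_num)).smul hF)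
      hφs.poissonBracket_left.smul_right
  rw [integral_add hA hB] at hdiv
  linarith
end

section
/- Let T > 0 and let y : ℝ → ℝ^m satisfy y(t + T) = y(t) for all t ∈ ℝ. Let Ψ : ℝ^m → ℂ and κ ∈ ℂ with Re(κ) > 0, and suppose Ψ(y(t)) = e^{κ t} Ψ(y(0)) for all t ≥ 0. Then Ψ(y(t)) = 0 for all t ∈ ℝ. -/
open Complex Function Set

/- Along the orbit, `t ↦ Ψ (y t)` is `T`-periodic, so `Ψ (y 0) = Ψ (y T) = e^{κ T} Ψ (y 0)`; since
`|e^{κ T}| = e^{T Re κ} > 1`, this forces `Ψ (y 0) = 0`, hence `Ψ (y t) = e^{κ t} Ψ (y 0) = 0` for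
`t ≥ 0`, and periodicity carries this to all of `ℝ`. -/

theorem Complex.exp_mul_ofReal_ne_one {κ : ℂ} (hκ : 0 < κ.re) {T : ℝ} (hT : 0 < T) :
    exp (κ * T) ≠ 1 := by
  intro h
  have hnorm : ‖exp (κ * T)‖ = Real.exp (κ.re * T) := by rw [norm_exp, re_mul_ofReal]
  rw [h, norm_one] at hnorm
  exact (Real.one_lt_exp_iff.2 (mul_pos hκ hT)).ne hnorm

theorem Function.Periodic.eq_zero_of_eq_exp_mul {f : ℝ → ℂ} {T : ℝ} {κ : ℂ} (hf : Periodic f T)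
    (hT : 0 < T) (hκT : exp (κ * T) ≠ 1) (hexp : ∀ t, 0 ≤ t → f t = exp (κ * t) * f 0) (t : ℝ) :
    f t = 0 := by
  have hf0 : f 0 = 0 := by
    by_contra hne
    have hfT : f T = f 0 := by simpa using hf 0
    exact hκT (mul_right_cancel₀ hne (by rw [one_mul, ← hexp T hT.le, hfT]))
  obtain ⟨s, hs, hts⟩ := hf.exists_mem_Ico₀ hT t
  rw [hts, hexp s hs.1, hf0, mul_zero]

/-- if `y` is `T`-periodic and `Ψ(y(t)) = e^{κ t} Ψ(y(0))` for all `t ≥ 0`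
with `Re(κ) > 0`, then `Ψ` vanishes along the whole orbit. -/
theorem stmt_13 (m : ℕ) (T : ℝ) (hT : 0 < T) (y : ℝ → Fin m → ℝ)
    (hper : ∀ t : ℝ, y (t + T) = y t)
    (Ψ : (Fin m → ℝ) → ℂ) (κ : ℂ) (hκ : 0 < κ.re)
    (hprop : ∀ t : ℝ, 0 ≤ t → Ψ (y t) = Complex.exp (κ * t) * Ψ (y 0)) :
    ∀ t : ℝ, Ψ (y t) = 0 :=
  Periodic.eq_zero_of_eq_exp_mul (f := Ψ ∘ y) (Periodic.comp hper Ψ) hT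
    (exp_mul_ofReal_ne_one hκ hT) hprop
end

section
/- Let y : ℝ → ℝ^m be continuous and let y_p : ℝ → ℝ^m be continuous and periodic with period T > 0, such that ‖y(t) − y_p(t)‖ → 0 as t → ∞. Let Ψ : ℝ^m → ℂ be continuous, and let κ ∈ ℂ with Re(κ) > 0 be such that Ψ(y(t)) = e^{κ t} Ψ(y(0)) for all t ≥ 0. Then Ψ(y(0)) = 0. -/
/-! The orbit of `y` is eventually trapped in a bounded neighbourhood of the compact periodic
orbit, on which the continuous `Ψ` is bounded; so `t ↦ Ψ (y t)` is bounded for large `t`,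
whereas `‖e^{κ t} Ψ (y 0)‖ = e^{(Re κ) t} ‖Ψ (y 0)‖` is unbounded unless `Ψ (y 0) = 0`. -/

open Filter Topology Metric Bornology Set

theorem isBoundedUnder_norm_comp_of_tendsto_dist {α E F : Type*} [PseudoMetricSpace E]
    [ProperSpace E] [SeminormedAddGroup F] {l : Filter α} {Ψ : E → F} (hΨ : Continuous Ψ)
    {y z : α → E} (hz : IsBounded (range z)) (h : Tendsto (fun t => dist (y t) (z t)) l (𝓝 0)) :
    IsBoundedUnder (· ≤ ·) l (fun t => ‖Ψ (y t)‖) := by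
  set K := cthickening 1 (range z)
  have hK : IsCompact K := isCompact_of_isClosed_isBounded isClosed_cthickening hz.cthickening
  obtain ⟨M, hM⟩ := hK.exists_bound_of_continuousOn hΨ.continuousOn
  have hyK : ∀ᶠ t in l, y t ∈ K := by
    filter_upwards [h.eventually (eventually_le_nhds one_pos)] with t ht
    exact mem_cthickening_of_dist_le _ _ _ _ (mem_range_self t) ht
  exact ⟨M, eventually_map.2 <| hyK.mono fun t ht => hM _ ht⟩

theorem eq_zero_of_isBoundedUnder_norm_exp_mul {κ a : ℂ} (hκ : 0 < κ.re)
    (h : IsBoundedUnder (· ≤ ·) atTop (fun t : ℝ => ‖Complex.exp (κ * t) * a‖)) : a = 0 := by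
  by_contra ha
  have hnorm : (fun t : ℝ => ‖Complex.exp (κ * t) * a‖) = fun t => Real.exp (κ.re * t) * ‖a‖ := by
    ext t
    simp [Complex.norm_exp, Complex.mul_re]
  rw [hnorm] at h
  refine not_isBoundedUnder_of_tendsto_atTop ?_ h
  exact (Real.tendsto_exp_atTop.comp (tendsto_id.const_mul_atTop hκ)).atTop_mul_const
    (norm_pos_iff.2 ha)

theorem stmt_14_general (m : ℕ) (y yp : ℝ → Fin m → ℝ)
    (hyp : Continuous yp)
    (T : ℝ) (hT : 0 < T) (hper : ∀ t : ℝ, yp (t + T) = yp t)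
    (hconv : Filter.Tendsto (fun t => ‖y t - yp t‖) Filter.atTop (nhds 0))
    (Ψ : (Fin m → ℝ) → ℂ) (hΨ : Continuous Ψ) (κ : ℂ) (hκ : 0 < κ.re)
    (hprop : ∀ t : ℝ, 0 ≤ t → Ψ (y t) = Complex.exp (κ * t) * Ψ (y 0)) :
    Ψ (y 0) = 0 := by
  have hbounded : IsBoundedUnder (· ≤ ·) atTop (fun t => ‖Ψ (y t)‖) :=
    isBoundedUnder_norm_comp_of_tendsto_dist hΨ
      (Function.Periodic.isBounded_of_continuous hper hT.ne' hyp)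
      (by simpa only [dist_eq_norm] using hconv)
  refine eq_zero_of_isBoundedUnder_norm_exp_mul hκ (hbounded.mono_le ?_)
  filter_upwards [eventually_ge_atTop 0] with t ht
  rw [hprop t ht]

/-- if a continuous trajectory `y` converges to a continuous `T`-periodic
orbit `y_p`, and a continuous function `Ψ` satisfies `Ψ(y(t)) = e^{κ t} Ψ(y(0))` for all
`t ≥ 0` with `Re(κ) > 0`, then `Ψ(y(0)) = 0`. -/
theorem stmt_14 (m : ℕ) (y yp : ℝ → Fin m → ℝ)
    (hy : Continuous y) (hyp : Continuous yp)
    (T : ℝ) (hT : 0 < T) (hper : ∀ t : ℝ, yp (t + T) = yp t)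
    (hconv : Filter.Tendsto (fun t => ‖y t - yp t‖) Filter.atTop (nhds 0))
    (Ψ : (Fin m → ℝ) → ℂ) (hΨ : Continuous Ψ) (κ : ℂ) (hκ : 0 < κ.re)
    (hprop : ∀ t : ℝ, 0 ≤ t → Ψ (y t) = Complex.exp (κ * t) * Ψ (y 0)) :
    Ψ (y 0) = 0 :=
  stmt_14_general m y yp hyp T hT hper hconv Ψ hΨ κ hκ hprop
end
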